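/- Let β ∈ (0,1) and a ∈ ℝ. For every t ≥ 0, the function u(r) := E_{β,1}(−a r^β) satisfies the Volterra integral equation u(t) = 1 − (a / Γ(β)) ∫_0^t (t − s)^{β−1} u(s) ds, where the integral is a convergent Lebesgue integral on (0, t). -/

import Mathlib

/-
Expand `E_{β,1}(-a s^β) = ∑ (-a)^k s^{βk} / Γ(βk + 1)` and integrate term by term against the
kernel `(t - s)^{β-1}`. Each term is a Beta integral,
`∫_0^t (t - s)^{β-1} s^{βk} ds = Γ(β) Γ(βk + 1) / Γ(βk + β + 1) · t^{βk + β}`,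
so `(a / Γ(β))` times the integral is
`-∑_{k ≥ 1} (-a t^β)^k / Γ(βk + 1) = 1 - E_{β,1}(-a t^β)`.
The interchange of sum and integral is justified by the same computation with `|a|` in place
of `-a`: the integrals of the absolute values form again a Mittag-Leffler type series, which
converges by the ratio test since `Γ(y + β) ≥ Γ(y) (y - 1)^β` (log-convexity of `Γ`).
-/

open MeasureTheory Set

/-- The one-parameter Mittag-Leffler function
`E_{β,1}(x) = ∑' k, x^k / Γ(βk + 1)`. -/
noncomputable def mittagLeffler (β x : ℝ) : ℝ :=
  ∑' k : ℕ, x ^ k / Real.Gamma (β * k + 1)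

open Filter

theorem Real.Gamma_mul_rpow_le_Gamma_add {x β : ℝ} (hx : 1 < x) (hβ : 0 < β) :
    Real.Gamma x * (x - 1) ^ β ≤ Real.Gamma (x + β) := by
  have hx0 : 0 < x - 1 := sub_pos.2 hx
  have hslope := Real.convexOn_log_Gamma.slope_mono_adjacent (x := x - 1) (y := x) (z := x + β)
    hx0 (by simp only [mem_Ioi]; linarith) (by linarith) (by linarith)
  have hrec : Real.Gamma x = (x - 1) * Real.Gamma (x - 1) := by
    simpa using Real.Gamma_add_one hx0.ne'
  have hΓ : 0 < Real.Gamma (x - 1) := Real.Gamma_pos_of_pos hx0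
  -- the slope of `log ∘ Γ` on `[x - 1, x]` is `log (x - 1)`
  simp only [Function.comp_apply, sub_sub_cancel, div_one, add_sub_cancel_left] at hslope
  rw [le_div_iff₀ hβ, hrec, Real.log_mul hx0.ne' hΓ.ne', add_sub_cancel_right] at hslope
  rw [hrec, Real.rpow_def_of_pos hx0,
    ← Real.exp_log (Real.Gamma_pos_of_pos (by linarith : 0 < x + β)),
    ← Real.exp_log (mul_pos hx0 hΓ), ← Real.exp_add, Real.exp_le_exp,
    Real.log_mul hx0.ne' hΓ.ne']
  linarith

theorem summable_pow_div_Gamma {β c : ℝ} (hβ : 0 < β) (hc : 0 < c) (x : ℝ) :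
    Summable fun k : ℕ => x ^ k / Real.Gamma (β * k + c) := by
  have hlin : Tendsto (fun k : ℕ => β * k + c - 1) atTop atTop :=
    tendsto_atTop_add_const_right _ _ <| tendsto_atTop_add_const_right _ _ <|
      (tendsto_natCast_atTop_atTop (R := ℝ)).const_mul_atTop hβ
  refine summable_of_ratio_norm_eventually_le (r := 1 / 2) (by norm_num) ?_
  filter_upwards [hlin.eventually_gt_atTop 0,
    ((tendsto_rpow_atTop hβ).comp hlin).eventually_ge_atTop (2 * |x|)] with k hy hgrowth
  set y := β * k + c
  have hΓy : 0 < Real.Gamma y := Real.Gamma_pos_of_pos (by linarith)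
  have hρ : 0 < (y - 1) ^ β := Real.rpow_pos_of_pos hy β
  have hGamma : Real.Gamma y * (y - 1) ^ β ≤ Real.Gamma (β * ↑(k + 1) + c) := by
    convert Real.Gamma_mul_rpow_le_Gamma_add (by linarith : 1 < y) hβ using 2
    push_cast; ring
  have hΓ' : 0 < Real.Gamma (β * ↑(k + 1) + c) := (mul_pos hΓy hρ).trans_le hGamma
  rw [norm_div, norm_div, Real.norm_of_nonneg hΓy.le, Real.norm_of_nonneg hΓ'.le, norm_pow,
    norm_pow, pow_succ]
  calc ‖x‖ ^ k * ‖x‖ / Real.Gamma (β * ↑(k + 1) + c)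
      ≤ ‖x‖ ^ k * ‖x‖ / (Real.Gamma y * (y - 1) ^ β) := by gcongr
    _ = ‖x‖ ^ k / Real.Gamma y * (‖x‖ / (y - 1) ^ β) := by ring
    _ ≤ ‖x‖ ^ k / Real.Gamma y * (1 / 2) := by
        refine mul_le_mul_of_nonneg_left ?_ (by positivity)
        rw [div_le_iff₀ hρ, Real.norm_eq_abs]
        simp only [Function.comp_apply] at hgrowth
        linarith
    _ = 1 / 2 * (‖x‖ ^ k / Real.Gamma y) := mul_comm _ _

theorem mittagLeffler_eq_one_add_mul {β : ℝ} (hβ : 0 < β) (x : ℝ) :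
    mittagLeffler β x = 1 + x * ∑' k : ℕ, x ^ k / Real.Gamma (β * k + (β + 1)) := by
  rw [mittagLeffler, (summable_pow_div_Gamma hβ one_pos x).tsum_eq_zero_add, ← tsum_mul_left]
  congr 1
  · simp
  · refine tsum_congr fun k => ?_
    rw [pow_succ', mul_div_assoc]
    push_cast
    ring_nf

theorem integral_Ioo_rpow_mul_sub_rpow {u v t : ℝ} (hu : 0 < u) (hv : 0 < v) (ht : 0 < t) :
    ∫ s in Ioo 0 t, s ^ (u - 1) * (t - s) ^ (v - 1)
      = Real.Gamma u * Real.Gamma v / Real.Gamma (u + v) * t ^ (u + v - 1) := by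
  have hscaled := Complex.betaIntegral_scaled u v ht
  rw [Complex.betaIntegral_eq_Gamma_mul_div _ _ (by simpa) (by simpa)] at hscaled
  have hreal : ∀ s ∈ uIcc 0 t, (s : ℂ) ^ ((u : ℂ) - 1) * ((t : ℂ) - s) ^ ((v : ℂ) - 1)
      = ((s ^ (u - 1) * (t - s) ^ (v - 1) : ℝ) : ℂ) := by
    intro s hs
    rw [uIcc_of_le ht.le] at hs
    push_cast
    rw [Complex.ofReal_cpow hs.1, Complex.ofReal_cpow (sub_nonneg.2 hs.2)]
    push_cast
    ring
  rw [intervalIntegral.integral_congr hreal, intervalIntegral.integral_ofReal,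
    intervalIntegral.integral_of_le ht.le, integral_Ioc_eq_integral_Ioo] at hscaled
  apply Complex.ofReal_injective
  rw [hscaled, ← Complex.ofReal_add, Complex.Gamma_ofReal, Complex.Gamma_ofReal,
    Complex.Gamma_ofReal]
  push_cast [Complex.ofReal_cpow ht.le]
  ring

theorem integrableOn_Ioo_rpow_mul_sub_rpow {u v t : ℝ} (hu : 0 < u) (hv : 0 < v) (ht : 0 < t) :
    IntegrableOn (fun s => s ^ (u - 1) * (t - s) ^ (v - 1)) (Ioo 0 t) :=
  Integrable.of_integral_ne_zero <| by
    rw [integral_Ioo_rpow_mul_sub_rpow hu hv ht]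
    positivity

theorem MeasureTheory.integrable_tsum_of_summable_integral_norm {α E : Type*}
    [MeasurableSpace α] {μ : Measure α} [NormedAddCommGroup E] [CompleteSpace E]
    {F : ℕ → α → E}
    (hF_int : ∀ i, Integrable (F i) μ) (hF_sum : Summable fun i ↦ ∫ a, ‖F i a‖ ∂μ) :
    Integrable (fun a ↦ ∑' i, F i a) μ := by
  have hmeas : ∀ i, AEMeasurable (fun a ↦ ‖F i a‖ₑ) μ := fun i ↦ (hF_int i).1.enorm
  have hfin : ∫⁻ a, ∑' i, ‖F i a‖ₑ ∂μ ≠ ⊤ := by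
    rw [lintegral_tsum hmeas,
      ← funext fun i ↦ ofReal_integral_norm_eq_lintegral_enorm (hF_int i),
      ← ENNReal.ofReal_tsum_of_nonneg (fun i ↦ integral_nonneg fun a ↦ norm_nonneg _) hF_sum]
    exact ENNReal.ofReal_ne_top
  have hsum : ∀ᵐ a ∂μ, Summable fun i ↦ F i a := by
    filter_upwards [ae_lt_top' (AEMeasurable.tsum hmeas) hfin] with a ha
    exact (tsum_enorm_ne_top_iff_summable_norm.1 ha.ne).of_norm
  refine ⟨aestronglyMeasurable_of_tendsto_ae (u := (atTop : Filter ℕ))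
    (fun n ↦ Finset.aestronglyMeasurable_sum (Finset.range n) fun i _ ↦ (hF_int i).1) ?_, ?_⟩
  · filter_upwards [hsum] with a ha
    simpa only [Finset.sum_apply] using ha.hasSum.tendsto_sum_nat
  · exact (lintegral_mono fun a ↦ enorm_tsum_le_tsum_enorm).trans_lt hfin.lt_top

section PowerSeriesTerms

variable {β t : ℝ}

theorem eqOn_sub_rpow_mul_pow_div_Gamma (c : ℝ) (k : ℕ) :
    EqOn (fun s => (t - s) ^ (β - 1) * ((c * s ^ β) ^ k / Real.Gamma (β * k + 1)))
      (fun s => c ^ k / Real.Gamma (β * k + 1) * (s ^ (β * k + 1 - 1) * (t - s) ^ (β - 1)))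
      (Ioo 0 t) := fun s hs => by
  dsimp only
  rw [add_sub_cancel_right, Real.rpow_mul hs.1.le, Real.rpow_natCast, mul_pow]
  ring

theorem integrableOn_sub_rpow_mul_pow_div_Gamma (hβ : 0 < β) (ht : 0 < t) (c : ℝ) (k : ℕ) :
    IntegrableOn (fun s => (t - s) ^ (β - 1) * ((c * s ^ β) ^ k / Real.Gamma (β * k + 1)))
      (Ioo 0 t) :=
  IntegrableOn.congr_fun ((integrableOn_Ioo_rpow_mul_sub_rpow (by positivity) hβ ht).const_mul _)
    (eqOn_sub_rpow_mul_pow_div_Gamma c k).symm measurableSet_Ioo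

theorem integral_sub_rpow_mul_pow_div_Gamma (hβ : 0 < β) (ht : 0 < t) (c : ℝ) (k : ℕ) :
    ∫ s in Ioo 0 t, (t - s) ^ (β - 1) * ((c * s ^ β) ^ k / Real.Gamma (β * k + 1))
      = Real.Gamma β * t ^ β * ((c * t ^ β) ^ k / Real.Gamma (β * k + (β + 1))) := by
  have hk : 0 < β * k + 1 := by positivity
  rw [setIntegral_congr_fun measurableSet_Ioo (eqOn_sub_rpow_mul_pow_div_Gamma c k),
    integral_const_mul, integral_Ioo_rpow_mul_sub_rpow hk hβ ht,
    show β * k + 1 + β = β * k + (β + 1) by ring,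
    show β * k + (β + 1) - 1 = β + β * k by ring,
    Real.rpow_add ht, Real.rpow_mul ht.le, Real.rpow_natCast, mul_pow]
  field_simp [(Real.Gamma_pos_of_pos hk).ne']

theorem norm_sub_rpow_mul_pow_div_Gamma (hβ : 0 < β) {s : ℝ} (hs : s ∈ Ioo 0 t) (c : ℝ)
    (k : ℕ) :
    ‖(t - s) ^ (β - 1) * ((c * s ^ β) ^ k / Real.Gamma (β * k + 1))‖
      = (t - s) ^ (β - 1) * ((|c| * s ^ β) ^ k / Real.Gamma (β * k + 1)) := by
  have hk : 0 < Real.Gamma (β * k + 1) := Real.Gamma_pos_of_pos (by positivity)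
  rw [Real.norm_eq_abs, abs_mul, abs_div, abs_pow, abs_mul, abs_of_pos hk,
    abs_of_nonneg (Real.rpow_nonneg hs.1.le β),
    abs_of_nonneg (Real.rpow_nonneg (sub_nonneg.2 hs.2.le) _)]

end PowerSeriesTerms

theorem mittagLeffler_volterra_equation_general
    (β a : ℝ) (hβ0 : 0 < β) (t : ℝ) (ht : 0 ≤ t) :
    IntegrableOn
        (fun s : ℝ => (t - s) ^ (β - 1) * mittagLeffler β (-(a * s ^ β)))
        (Ioo 0 t) volume ∧
      mittagLeffler β (-(a * t ^ β))
        = 1 - (a / Real.Gamma β) *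
            ∫ s in Ioo (0 : ℝ) t,
              (t - s) ^ (β - 1) * mittagLeffler β (-(a * s ^ β)) := by
  rcases ht.eq_or_lt with rfl | ht
  · simp [Real.zero_rpow hβ0.ne', mittagLeffler_eq_one_add_mul hβ0]
  set F : ℕ → ℝ → ℝ := fun k s =>
    (t - s) ^ (β - 1) * ((-a * s ^ β) ^ k / Real.Gamma (β * k + 1))
  have hF : (fun s => (t - s) ^ (β - 1) * mittagLeffler β (-(a * s ^ β)))
      = fun s => ∑' k, F k s :=
    funext fun s => by simp only [F, mittagLeffler, neg_mul, tsum_mul_left]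
  have hF_int (k : ℕ) : IntegrableOn (F k) (Ioo 0 t) :=
    integrableOn_sub_rpow_mul_pow_div_Gamma hβ0 ht (-a) k
  have hF_sum : Summable fun k => ∫ s in Ioo 0 t, ‖F k s‖ := by
    simp_rw [F, setIntegral_congr_fun measurableSet_Ioo
      fun s hs => norm_sub_rpow_mul_pow_div_Gamma hβ0 hs (-a) _,
      integral_sub_rpow_mul_pow_div_Gamma hβ0 ht]
    exact (summable_pow_div_Gamma hβ0 (by positivity) _).mul_left _
  rw [hF, ← integral_tsum_of_summable_integral_norm hF_int hF_sum]
  refine ⟨integrable_tsum_of_summable_integral_norm hF_int hF_sum, ?_⟩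
  simp_rw [F, integral_sub_rpow_mul_pow_div_Gamma hβ0 ht, tsum_mul_left,
    mittagLeffler_eq_one_add_mul hβ0]
  field_simp [(Real.Gamma_pos_of_pos hβ0).ne']
  ring

/-- The Mittag-Leffler relaxation function `u(r) = E_{β,1}(-a r^β)` satisfies the
Volterra integral equation `u(t) = 1 - (a/Γ(β)) ∫_0^t (t-s)^(β-1) u(s) ds`,
the integral being a convergent Lebesgue integral on `(0,t)`. -/
theorem mittagLeffler_volterra_equation
    (β a : ℝ) (hβ0 : 0 < β) (hβ1 : β < 1) (t : ℝ) (ht : 0 ≤ t) :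
    IntegrableOn
        (fun s : ℝ => (t - s) ^ (β - 1) * mittagLeffler β (-(a * s ^ β)))
        (Ioo 0 t) volume ∧
      mittagLeffler β (-(a * t ^ β))
        = 1 - (a / Real.Gamma β) *
            ∫ s in Ioo (0 : ℝ) t,
              (t - s) ^ (β - 1) * mittagLeffler β (-(a * s ^ β)) :=
  mittagLeffler_volterra_equation_general β a hβ0 t ht
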